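/- Let R_ℓ be the free unital associative 𝔽-algebra on x₁,…,x_ℓ with partial derivatives ∂/∂x_i. For F = (F₁,…,F_ℓ) ∈ (R_ℓ)^ℓ: ∂F_j/∂x_i = (∂F_i/∂x_j)^σ for all i,j if and only if there exists f ∈ R_ℓ with F_i = m((∂f/∂x_i)^σ) for every i = 1,…,ℓ. -/

import Mathlib

open TensorProduct LinearMap

section DPA

variable (𝔽 : Type) [Field 𝔽] (V : Type) [Ring V] [Algebra 𝔽 V]

/-- The swap `(u ⊗ v)^σ = v ⊗ u` on `V ⊗ V`. -/
noncomputable abbrev swap2 : V ⊗[𝔽] V ≃ₗ[𝔽] V ⊗[𝔽] V := TensorProduct.comm 𝔽 V V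

/-- The cyclic permutation `(u ⊗ v ⊗ w)^σ = w ⊗ u ⊗ v` on `V ⊗ V ⊗ V = (V ⊗ V) ⊗ V`. -/
noncomputable def sigma3 : (V ⊗[𝔽] V) ⊗[𝔽] V ≃ₗ[𝔽] (V ⊗[𝔽] V) ⊗[𝔽] V :=
  (TensorProduct.comm 𝔽 (V ⊗[𝔽] V) V).trans (TensorProduct.assoc 𝔽 V V V).symm

/-- Left multiplication `a · (u ⊗ v) = (a*u) ⊗ v` (outer bimodule structure). -/
noncomputable def lact2 (a : V) : V ⊗[𝔽] V →ₗ[𝔽] V ⊗[𝔽] V :=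
  LinearMap.rTensor V (LinearMap.mulLeft 𝔽 a)

/-- Right multiplication `(u ⊗ v) · c = u ⊗ (v*c)` (outer bimodule structure). -/
noncomputable def ract2 (c : V) : V ⊗[𝔽] V →ₗ[𝔽] V ⊗[𝔽] V :=
  LinearMap.lTensor V (LinearMap.mulRight 𝔽 c)

/-- `(u ⊗ v) ⋆₁ b = (u*b) ⊗ v`. -/
noncomputable def star1r (b : V) : V ⊗[𝔽] V →ₗ[𝔽] V ⊗[𝔽] V :=
  LinearMap.rTensor V (LinearMap.mulRight 𝔽 b)

/-- `a ⋆₁ (u ⊗ v) = u ⊗ (a*v)`. -/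
noncomputable def star1l (a : V) : V ⊗[𝔽] V →ₗ[𝔽] V ⊗[𝔽] V :=
  LinearMap.lTensor V (LinearMap.mulLeft 𝔽 a)

/-- The `•`-product on `V ⊗ V`:  `(u ⊗ v) • (x ⊗ y) = (u*x) ⊗ (y*v)`
(the multiplication of `V ⊗ Vᵒᵖ`). -/
noncomputable def bullet : V ⊗[𝔽] V →ₗ[𝔽] V ⊗[𝔽] V →ₗ[𝔽] V ⊗[𝔽] V :=
  TensorProduct.lift
    (((TensorProduct.mapBilinear (RingHom.id 𝔽) V V V V).comp (LinearMap.mul 𝔽 V)).compl₂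
      ((LinearMap.mul 𝔽 V).flip))

/-- A `2`-fold bracket on `V`: an `𝔽`-bilinear map `V × V → V ⊗ V` satisfying the two
Leibniz rules `{{a,bc}} = {{a,b}}·c + b·{{a,c}}` and `{{ab,c}} = {{a,c}} ⋆₁ b + a ⋆₁ {{b,c}}`. -/
def IsDoubleBracket (Br : V →ₗ[𝔽] V →ₗ[𝔽] V ⊗[𝔽] V) : Prop :=
  (∀ a b c : V, Br a (b * c) = ract2 𝔽 V c (Br a b) + lact2 𝔽 V b (Br a c)) ∧
  (∀ a b c : V, Br (a * b) c = star1r 𝔽 V b (Br a c) + star1l 𝔽 V a (Br b c))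

variable {𝔽 V}

/-- `{{a, B}}_L` : apply the bracket to the first tensor factor. -/
noncomputable def brL (Br : V →ₗ[𝔽] V →ₗ[𝔽] V ⊗[𝔽] V) (a : V) :
    V ⊗[𝔽] V →ₗ[𝔽] (V ⊗[𝔽] V) ⊗[𝔽] V :=
  LinearMap.rTensor V (Br a)

/-- `{{a, B}}_R` : apply the bracket to the second tensor factor. -/
noncomputable def brR (Br : V →ₗ[𝔽] V →ₗ[𝔽] V ⊗[𝔽] V) (a : V) :
    V ⊗[𝔽] V →ₗ[𝔽] (V ⊗[𝔽] V) ⊗[𝔽] V :=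
  (TensorProduct.assoc 𝔽 V V V).symm.toLinearMap ∘ₗ LinearMap.lTensor V (Br a)

variable (𝔽 V)

/-- `ρ₂` : swap the last two tensor factors of `V ⊗ V ⊗ V`. -/
noncomputable def rho2 : (V ⊗[𝔽] V) ⊗[𝔽] V ≃ₗ[𝔽] (V ⊗[𝔽] V) ⊗[𝔽] V :=
  (TensorProduct.assoc 𝔽 V V V).trans
    ((TensorProduct.congr (LinearEquiv.refl 𝔽 V) (TensorProduct.comm 𝔽 V V)).trans
      (TensorProduct.assoc 𝔽 V V V).symm)

variable {𝔽 V}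

/-- Conjugated bullet action used to define the actions `•ᵢ` of `V ⊗ V` on `V ⊗ V ⊗ V`. -/
noncomputable def conjAct (β : V ⊗[𝔽] V →ₗ[𝔽] V ⊗[𝔽] V →ₗ[𝔽] V ⊗[𝔽] V)
    (ρ : (V ⊗[𝔽] V) ⊗[𝔽] V ≃ₗ[𝔽] (V ⊗[𝔽] V) ⊗[𝔽] V) :
    V ⊗[𝔽] V →ₗ[𝔽] (V ⊗[𝔽] V) ⊗[𝔽] V →ₗ[𝔽] (V ⊗[𝔽] V) ⊗[𝔽] V :=
  (LinearMap.lcomp 𝔽 _ ρ.toLinearMap) ∘ₗ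
    (LinearMap.llcomp 𝔽 ((V ⊗[𝔽] V) ⊗[𝔽] V) ((V ⊗[𝔽] V) ⊗[𝔽] V) ((V ⊗[𝔽] V) ⊗[𝔽] V)
      ρ.symm.toLinearMap) ∘ₗ
    (LinearMap.rTensorHom V) ∘ₗ β

variable (𝔽 V)

/-- The right action `X •₁ A`, i.e. `(x⊗y⊗z) •₁ (a⊗b) = x⊗(y*a)⊗(b*z)`;
`bAct1R A X = X •₁ A`. -/
noncomputable def bAct1R : V ⊗[𝔽] V →ₗ[𝔽] (V ⊗[𝔽] V) ⊗[𝔽] V →ₗ[𝔽] (V ⊗[𝔽] V) ⊗[𝔽] V :=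
  conjAct (bullet 𝔽 V).flip ((sigma3 𝔽 V).trans (sigma3 𝔽 V))

/-- The left action `A •₂ X`, i.e. `(a⊗b) •₂ (x⊗y⊗z) = (a*x)⊗y⊗(z*b)`. -/
noncomputable def bAct2L : V ⊗[𝔽] V →ₗ[𝔽] (V ⊗[𝔽] V) ⊗[𝔽] V →ₗ[𝔽] (V ⊗[𝔽] V) ⊗[𝔽] V :=
  conjAct (bullet 𝔽 V) (rho2 𝔽 V)

/-- The right action `X •₃ A`, i.e. `(x⊗y⊗z) •₃ (a⊗b) = (x*a)⊗(b*y)⊗z`;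
`bAct3R A X = X •₃ A`. -/
noncomputable def bAct3R : V ⊗[𝔽] V →ₗ[𝔽] (V ⊗[𝔽] V) ⊗[𝔽] V →ₗ[𝔽] (V ⊗[𝔽] V) ⊗[𝔽] V :=
  conjAct (bullet 𝔽 V).flip (LinearEquiv.refl 𝔽 ((V ⊗[𝔽] V) ⊗[𝔽] V))

/-- `a ⋆₁ (x⊗y⊗z) = x⊗(a*y)⊗z`. -/
noncomputable def slot2L (a : V) : (V ⊗[𝔽] V) ⊗[𝔽] V →ₗ[𝔽] (V ⊗[𝔽] V) ⊗[𝔽] V :=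
  LinearMap.rTensor V (LinearMap.lTensor V (LinearMap.mulLeft 𝔽 a))

/-- `(x⊗y⊗z) ⋆₁ b = x⊗(y*b)⊗z`. -/
noncomputable def slot2R (b : V) : (V ⊗[𝔽] V) ⊗[𝔽] V →ₗ[𝔽] (V ⊗[𝔽] V) ⊗[𝔽] V :=
  LinearMap.rTensor V (LinearMap.lTensor V (LinearMap.mulRight 𝔽 b))

/-- `a ⋆₂ (x⊗y⊗z) = x⊗y⊗(a*z)`. -/
noncomputable def slot3L (a : V) : (V ⊗[𝔽] V) ⊗[𝔽] V →ₗ[𝔽] (V ⊗[𝔽] V) ⊗[𝔽] V :=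
  LinearMap.lTensor (V ⊗[𝔽] V) (LinearMap.mulLeft 𝔽 a)

/-- `(x⊗y⊗z) ⋆₂ b = (x*b)⊗y⊗z`. -/
noncomputable def slot1R (b : V) : (V ⊗[𝔽] V) ⊗[𝔽] V →ₗ[𝔽] (V ⊗[𝔽] V) ⊗[𝔽] V :=
  LinearMap.rTensor V (LinearMap.rTensor V (LinearMap.mulRight 𝔽 b))

/-- outer left: `a · (x⊗y⊗z) = (a*x)⊗y⊗z`. -/
noncomputable def slot1L (a : V) : (V ⊗[𝔽] V) ⊗[𝔽] V →ₗ[𝔽] (V ⊗[𝔽] V) ⊗[𝔽] V :=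
  LinearMap.rTensor V (LinearMap.rTensor V (LinearMap.mulLeft 𝔽 a))

/-- outer right: `(x⊗y⊗z) · b = x⊗y⊗(z*b)`. -/
noncomputable def slot3R (b : V) : (V ⊗[𝔽] V) ⊗[𝔽] V →ₗ[𝔽] (V ⊗[𝔽] V) ⊗[𝔽] V :=
  LinearMap.lTensor (V ⊗[𝔽] V) (LinearMap.mulRight 𝔽 b)

variable {𝔽 V}

/-- The triple bracket `{{a,b,c}}`. -/
noncomputable def triple (Br : V →ₗ[𝔽] V →ₗ[𝔽] V ⊗[𝔽] V) (a b c : V) :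
    (V ⊗[𝔽] V) ⊗[𝔽] V :=
  brL Br a (Br b c) + sigma3 𝔽 V (brL Br b (Br c a)) +
    sigma3 𝔽 V (sigma3 𝔽 V (brL Br c (Br a b)))

variable (𝔽 V)

/-- Skewsymmetry of a 2-fold bracket. -/
def IsSkew (Br : V →ₗ[𝔽] V →ₗ[𝔽] V ⊗[𝔽] V) : Prop :=
  ∀ a b : V, Br a b = - swap2 𝔽 V (Br b a)

/-- The span of commutators `[V,V]`. -/
def commSub : Submodule 𝔽 V := Submodule.span 𝔽 {x : V | ∃ a b : V, x = a * b - b * a}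

variable {𝔽 V}

/-- The associated bracket `{a,b} = m {{a,b}}`. -/
noncomputable def sb (Br : V →ₗ[𝔽] V →ₗ[𝔽] V ⊗[𝔽] V) (a b : V) : V :=
  LinearMap.mul' 𝔽 V (Br a b)

/-- A 2-fold derivation: `D(ab) = (Da)·b + a·(Db)`. -/
def Is2Deriv (D : V →ₗ[𝔽] V ⊗[𝔽] V) : Prop :=
  ∀ a b : V, D (a * b) = ract2 𝔽 V b (D a) + lact2 𝔽 V a (D b)

/-- `D` and `E` strongly commute: `D_L ∘ E = E_R ∘ D`. -/
def StronglyComm (D E : V →ₗ[𝔽] V ⊗[𝔽] V) : Prop :=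
  ∀ f : V, LinearMap.rTensor V D (E f) =
    (TensorProduct.assoc 𝔽 V V V).symm (LinearMap.lTensor V E (D f))


end DPA

/-!
Gradients are closed: the partial derivatives of the free algebra strongly commute (an induction
on monomials), and for strongly commuting 2-fold derivations `D, E` the Leibniz rule gives
`D (m (E f)^σ) = (E (m (D f)^σ))^σ`.

Closed forms are exact: take `f = ∑ᵢ xᵢ · S Fᵢ`, where `S` divides a monomial of degree `n` by
`n + 1`. As `∂ⱼ` lowers the total degree by one, `∂ⱼ ∘ S = S₂ ∘ ∂ⱼ` for a scaling `S₂` of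
`R ⊗ R` that commutes with `σ`. Closedness then turns `m (∂ⱼ f)^σ` into
`S Fⱼ + ∑ᵢ m (xᵢ ⋆₁ ∂ᵢ (S Fⱼ))`, and the Euler identity `∑ᵢ m (xᵢ ⋆₁ ∂ᵢ g) = deg g` makes this
`(1 + deg) (S Fⱼ) = Fⱼ`.
-/

section TwoDerivations

variable {𝔽 V : Type} [Field 𝔽] [Ring V] [Algebra 𝔽 V]

theorem swap2_lact2 (a : V) (X : V ⊗[𝔽] V) :
    swap2 𝔽 V (lact2 𝔽 V a X) = star1l 𝔽 V a (swap2 𝔽 V X) := by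
  induction X using TensorProduct.induction_on with
  | zero => simp
  | tmul u v => simp [lact2, star1l]
  | add X Y hX hY => simp only [map_add, hX, hY]

theorem star1l_lact2 (a b : V) (X : V ⊗[𝔽] V) :
    star1l 𝔽 V a (lact2 𝔽 V b X) = lact2 𝔽 V b (star1l 𝔽 V a X) := by
  simp only [star1l, lact2, ← comp_apply, lTensor_comp_rTensor, rTensor_comp_lTensor]

theorem mul'_lact2 (a : V) (X : V ⊗[𝔽] V) : mul' 𝔽 V (lact2 𝔽 V a X) = a * mul' 𝔽 V X := by
  induction X using TensorProduct.induction_on with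
  | zero => simp
  | tmul u v => simp [lact2, mul_assoc]
  | add X Y hX hY => simp only [map_add, hX, hY, mul_add]

theorem assoc_symm_lTensor_lact2 (E : V →ₗ[𝔽] V ⊗[𝔽] V) (a : V) (X : V ⊗[𝔽] V) :
    (TensorProduct.assoc 𝔽 V V V).symm (lTensor V E (lact2 𝔽 V a X)) =
      slot1L 𝔽 V a ((TensorProduct.assoc 𝔽 V V V).symm (lTensor V E X)) := by
  simp only [slot1L, lact2, rTensor, lTensor, map_map_assoc_symm, map_id, ← comp_apply,
    ← map_comp, id_comp, comp_id]

theorem Is2Deriv.apply_one {D : V →ₗ[𝔽] V ⊗[𝔽] V} (hD : Is2Deriv D) : D 1 = 0 := by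
  have h := hD 1 1
  simp only [mul_one, ract2, lact2, mulRight_one, mulLeft_one, lTensor_id, rTensor_id,
    id_apply] at h
  exact left_eq_add.mp h

variable (𝔽 V) in
noncomputable def ractLift : V ⊗[𝔽] (V ⊗[𝔽] V) →ₗ[𝔽] V ⊗[𝔽] V :=
  TensorProduct.lift (lTensorHom V ∘ₗ (LinearMap.mul 𝔽 V).flip)

variable (𝔽 V) in
noncomputable def lactLift : (V ⊗[𝔽] V) ⊗[𝔽] V →ₗ[𝔽] V ⊗[𝔽] V :=
  TensorProduct.lift (rTensorHom V ∘ₗ LinearMap.mul 𝔽 V).flip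

@[simp]
theorem ractLift_tmul (a : V) (t : V ⊗[𝔽] V) : ractLift 𝔽 V (a ⊗ₜ t) = ract2 𝔽 V a t := rfl

@[simp]
theorem lactLift_tmul (t : V ⊗[𝔽] V) (c : V) : lactLift 𝔽 V (t ⊗ₜ c) = lact2 𝔽 V c t := rfl

theorem lactLift_assoc_symm (Y : V ⊗[𝔽] (V ⊗[𝔽] V)) :
    lactLift 𝔽 V ((TensorProduct.assoc 𝔽 V V V).symm Y) = swap2 𝔽 V (ractLift 𝔽 V Y) := by
  have : lactLift 𝔽 V ∘ₗ (TensorProduct.assoc 𝔽 V V V).symm.toLinearMap =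
      (swap2 𝔽 V).toLinearMap ∘ₗ ractLift 𝔽 V :=
    TensorProduct.ext_threefold' fun a b c => by simp [ract2, lact2]
  exact LinearMap.congr_fun this Y

theorem Is2Deriv.apply_mul'_swap2 {D : V →ₗ[𝔽] V ⊗[𝔽] V} (hD : Is2Deriv D) (X : V ⊗[𝔽] V) :
    D (mul' 𝔽 V (swap2 𝔽 V X)) = ractLift 𝔽 V (lTensor V D X) + lactLift 𝔽 V (rTensor V D X) := by
  induction X using TensorProduct.induction_on with
  | zero => simp
  | tmul u v => simpa using hD v u
  | add X Y hX hY => simp only [map_add, hX, hY]; abel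

theorem Is2Deriv.closed_of_stronglyComm {D E : V →ₗ[𝔽] V ⊗[𝔽] V} (hD : Is2Deriv D)
    (hE : Is2Deriv E) (hDE : StronglyComm D E) (hED : StronglyComm E D) (f : V) :
    D (mul' 𝔽 V (swap2 𝔽 V (E f))) = swap2 𝔽 V (E (mul' 𝔽 V (swap2 𝔽 V (D f)))) := by
  rw [hD.apply_mul'_swap2, hE.apply_mul'_swap2, hDE, hED, lactLift_assoc_symm,
    lactLift_assoc_symm, map_add, comm_comm, add_comm]

end TwoDerivations

section PartialDerivatives

open FreeAlgebra

variable {𝔽 X : Type} [Field 𝔽]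

local notation "𝕍" => FreeAlgebra 𝔽 X
local notation "𝔹" => basisFreeMonoid 𝔽 X

theorem basisFreeMonoid_eq_lift (w : FreeMonoid X) : 𝔹 w = FreeMonoid.lift (ι 𝔽) w := by
  simp [basisFreeMonoid, equivMonoidAlgebraFreeMonoid]

theorem basisFreeMonoid_one : 𝔹 1 = 1 := by
  rw [basisFreeMonoid_eq_lift, map_one]

theorem basisFreeMonoid_of_mul (k : X) (w : FreeMonoid X) :
    𝔹 (FreeMonoid.of k * w) = ι 𝔽 k * 𝔹 w := by
  rw [basisFreeMonoid_eq_lift, basisFreeMonoid_eq_lift, map_mul, FreeMonoid.lift_eval_of]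

noncomputable def degScale (c : ℕ → 𝔽) : 𝕍 →ₗ[𝔽] 𝕍 :=
  (basisFreeMonoid 𝔽 X).constr 𝔽 fun w => c w.length • 𝔹 w

noncomputable def degScale₂ (c : ℕ → 𝔽) : 𝕍 ⊗[𝔽] 𝕍 →ₗ[𝔽] 𝕍 ⊗[𝔽] 𝕍 :=
  ((basisFreeMonoid 𝔽 X).tensorProduct (basisFreeMonoid 𝔽 X)).constr 𝔽
    fun p => c (p.1.length + p.2.length) • (𝔹 p.1 ⊗ₜ 𝔹 p.2)

@[simp]
theorem degScale_basisFreeMonoid (c : ℕ → 𝔽) (w : FreeMonoid X) :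
    degScale c (𝔹 w) = c w.length • 𝔹 w :=
  Module.Basis.constr_basis _ _ _ _

@[simp]
theorem degScale₂_tmul_basisFreeMonoid (c : ℕ → 𝔽) (u v : FreeMonoid X) :
    degScale₂ c (𝔹 u ⊗ₜ 𝔹 v) = c (u.length + v.length) • (𝔹 u ⊗ₜ 𝔹 v) := by
  have h := Module.Basis.constr_basis ((basisFreeMonoid 𝔽 X).tensorProduct
    (basisFreeMonoid 𝔽 X)) 𝔽 (fun p => c (p.1.length + p.2.length) • (𝔹 p.1 ⊗ₜ[𝔽] 𝔹 p.2)) (u, v)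
  rwa [Module.Basis.tensorProduct_apply] at h

theorem degScale_one : degScale (1 : ℕ → 𝔽) = (LinearMap.id : FreeAlgebra 𝔽 X →ₗ[𝔽] _) :=
  (basisFreeMonoid 𝔽 X).ext fun w => by simp

theorem degScale_add (c d : ℕ → 𝔽) : degScale (c + d) = degScale c + degScale (X := X) d :=
  (basisFreeMonoid 𝔽 X).ext fun w => by simp [add_smul]

theorem degScale_comp_degScale (c d : ℕ → 𝔽) :
    degScale c ∘ₗ degScale d = degScale (X := X) (c * d) :=
  (basisFreeMonoid 𝔽 X).ext fun w => by simp [smul_smul, mul_comm]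

theorem swap2_degScale₂ (c : ℕ → 𝔽) (Y : 𝕍 ⊗[𝔽] 𝕍) :
    swap2 𝔽 𝕍 (degScale₂ c Y) = degScale₂ c (swap2 𝔽 𝕍 Y) := by
  have : (swap2 𝔽 𝕍).toLinearMap ∘ₗ degScale₂ c = degScale₂ c ∘ₗ (swap2 𝔽 𝕍).toLinearMap :=
    ((basisFreeMonoid 𝔽 X).tensorProduct (basisFreeMonoid 𝔽 X)).ext fun ⟨u, v⟩ => by
      simp [add_comm]
  exact LinearMap.congr_fun this Y

theorem degScale₂_lact2_ι (c : ℕ → 𝔽) (k : X) (Y : 𝕍 ⊗[𝔽] 𝕍) :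
    degScale₂ c (lact2 𝔽 𝕍 (ι 𝔽 k) Y) = lact2 𝔽 𝕍 (ι 𝔽 k) (degScale₂ (fun n => c (n + 1)) Y) := by
  have : degScale₂ c ∘ₗ lact2 𝔽 𝕍 (ι 𝔽 k) = lact2 𝔽 𝕍 (ι 𝔽 k) ∘ₗ degScale₂ (fun n => c (n + 1)) :=
    ((basisFreeMonoid 𝔽 X).tensorProduct (basisFreeMonoid 𝔽 X)).ext fun ⟨u, v⟩ => by
      have h : lact2 𝔽 𝕍 (ι 𝔽 k) (𝔹 u ⊗ₜ 𝔹 v) = 𝔹 (FreeMonoid.of k * u) ⊗ₜ 𝔹 v := by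
        simp [lact2, basisFreeMonoid_of_mul]
      simp only [LinearMap.comp_apply, Module.Basis.tensorProduct_apply,
        degScale₂_tmul_basisFreeMonoid, map_smul, h, FreeMonoid.length_mul, FreeMonoid.length_of]
      congr 2
      omega
  exact LinearMap.congr_fun this Y

variable [DecidableEq X]

structure IsPartialDeriv (D : 𝕍 →ₗ[𝔽] 𝕍 ⊗[𝔽] 𝕍) (i : X) : Prop where
  is2Deriv : Is2Deriv D
  apply_ι : ∀ k, D (ι 𝔽 k) = if i = k then 1 ⊗ₜ[𝔽] 1 else 0

namespace IsPartialDeriv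

variable {D E : FreeAlgebra 𝔽 X →ₗ[𝔽] FreeAlgebra 𝔽 X ⊗[𝔽] FreeAlgebra 𝔽 X} {i j : X}

theorem apply_ι_mul (hD : IsPartialDeriv D i) (k : X) (u : 𝕍) :
    D (ι 𝔽 k * u) = (if i = k then 1 ⊗ₜ[𝔽] u else 0) + lact2 𝔽 𝕍 (ι 𝔽 k) (D u) := by
  rw [hD.is2Deriv, hD.apply_ι]
  split_ifs <;> simp [ract2]

theorem rTensor_lact2_ι (hD : IsPartialDeriv D i) (k : X) (Y : 𝕍 ⊗[𝔽] 𝕍) :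
    rTensor 𝕍 D (lact2 𝔽 𝕍 (ι 𝔽 k) Y) =
      (if i = k then (TensorProduct.assoc 𝔽 𝕍 𝕍 𝕍).symm (1 ⊗ₜ[𝔽] Y) else 0) +
        slot1L 𝔽 𝕍 (ι 𝔽 k) (rTensor 𝕍 D Y) := by
  induction Y using TensorProduct.induction_on with
  | zero => simp
  | tmul u v =>
    rw [lact2, rTensor_tmul, rTensor_tmul, mulLeft_apply, hD.apply_ι_mul]
    split_ifs <;> simp [slot1L, lact2, TensorProduct.add_tmul]
  | add Y Z hY hZ => simp only [map_add, hY, hZ, TensorProduct.tmul_add]; split_ifs <;> abel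

theorem stronglyComm (hD : IsPartialDeriv D i) (hE : IsPartialDeriv E j) : StronglyComm D E := by
  suffices h : rTensor 𝕍 D ∘ₗ E =
      (TensorProduct.assoc 𝔽 𝕍 𝕍 𝕍).symm.toLinearMap ∘ₗ lTensor 𝕍 E ∘ₗ D from
    LinearMap.congr_fun h
  refine (basisFreeMonoid 𝔽 X).ext fun w => ?_
  induction w using FreeMonoid.recOn with
  | one => simp [basisFreeMonoid_one, hD.is2Deriv.apply_one, hE.is2Deriv.apply_one]
  | of_mul k w ih =>
    simp only [comp_apply, LinearEquiv.coe_coe] at ih ⊢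
    rw [basisFreeMonoid_of_mul, hE.apply_ι_mul, hD.apply_ι_mul, map_add, map_add, map_add,
      hD.rTensor_lact2_ι, assoc_symm_lTensor_lact2, ih]
    split_ifs <;> simp [hD.is2Deriv.apply_one]

theorem degScale₂_apply_basisFreeMonoid (hD : IsPartialDeriv D i) (w : FreeMonoid X)
    (c : ℕ → 𝔽) :
    degScale₂ (fun n => c (n + 1)) (D (𝔹 w)) = c w.length • D (𝔹 w) := by
  induction w using FreeMonoid.recOn generalizing c with
  | one => simp [basisFreeMonoid_one, hD.is2Deriv.apply_one]
  | of_mul k w ih =>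
    rw [basisFreeMonoid_of_mul, hD.apply_ι_mul, map_add, degScale₂_lact2_ι,
      ih (fun n => c (n + 1)), map_smul, smul_add]
    congr 1
    split_ifs
    · rw [← basisFreeMonoid_one, degScale₂_tmul_basisFreeMonoid]
      simp [add_comm]
    · simp

theorem apply_degScale (hD : IsPartialDeriv D i) (c : ℕ → 𝔽) (f : 𝕍) :
    D (degScale c f) = degScale₂ (fun n => c (n + 1)) (D f) := by
  have : D ∘ₗ degScale c = degScale₂ (fun n => c (n + 1)) ∘ₗ D :=
    (basisFreeMonoid 𝔽 X).ext fun w => by simp [hD.degScale₂_apply_basisFreeMonoid]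
  exact LinearMap.congr_fun this f

end IsPartialDeriv

variable {D : X → (FreeAlgebra 𝔽 X →ₗ[𝔽] FreeAlgebra 𝔽 X ⊗[𝔽] FreeAlgebra 𝔽 X)}

theorem mul'_swap2_apply_ι_mul_degScale (hD : ∀ i, IsPartialDeriv (D i) i) (F : X → 𝕍)
    (hF : ∀ i j, D i (F j) = swap2 𝔽 𝕍 (D j (F i))) (c : ℕ → 𝔽) (i j : X) :
    mul' 𝔽 𝕍 (swap2 𝔽 𝕍 (D j (ι 𝔽 i * degScale c (F i)))) =
      (if j = i then degScale c (F j) else 0) +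
        mul' 𝔽 𝕍 (star1l 𝔽 𝕍 (ι 𝔽 i) (D i (degScale c (F j)))) := by
  rw [(hD j).apply_ι_mul, map_add, map_add, swap2_lact2, (hD j).apply_degScale,
    swap2_degScale₂, ← hF, ← (hD i).apply_degScale]
  split_ifs with h <;> simp [h]

variable [Fintype X]

theorem euler_formula (hD : ∀ i, IsPartialDeriv (D i) i) (g : 𝕍) :
    ∑ i, mul' 𝔽 𝕍 (star1l 𝔽 𝕍 (ι 𝔽 i) (D i g)) = degScale (fun n => (n : 𝔽)) g := by
  suffices h : ∑ i, mul' 𝔽 𝕍 ∘ₗ star1l 𝔽 𝕍 (ι 𝔽 i) ∘ₗ D i = degScale (fun n => (n : 𝔽)) by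
    simpa using LinearMap.congr_fun h g
  refine (basisFreeMonoid 𝔽 X).ext fun w => ?_
  simp only [LinearMap.sum_apply, comp_apply, degScale_basisFreeMonoid]
  induction w using FreeMonoid.recOn with
  | one => simp [basisFreeMonoid_one, (hD _).is2Deriv.apply_one]
  | of_mul k w ih =>
    have hterm (i : X) : mul' 𝔽 𝕍 (star1l 𝔽 𝕍 (ι 𝔽 i) (D i (ι 𝔽 k * 𝔹 w))) =
        (if i = k then ι 𝔽 k * 𝔹 w else 0) + ι 𝔽 k * mul' 𝔽 𝕍 (star1l 𝔽 𝕍 (ι 𝔽 i) (D i (𝔹 w))) := by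
      rw [(hD i).apply_ι_mul, map_add, map_add, star1l_lact2, mul'_lact2]
      split_ifs with h <;> simp [star1l, h]
    rw [basisFreeMonoid_of_mul]
    simp only [hterm, Finset.sum_add_distrib, Finset.sum_ite_eq', Finset.mem_univ, if_true,
      ← Finset.mul_sum, ih]
    simp [add_smul, add_comm]

theorem mul'_swap2_apply_sum_ι_mul_degScale [CharZero 𝔽] (hD : ∀ i, IsPartialDeriv (D i) i)
    (F : X → 𝕍) (hF : ∀ i j, D i (F j) = swap2 𝔽 𝕍 (D j (F i))) (j : X) :
    mul' 𝔽 𝕍 (swap2 𝔽 𝕍 (D j (∑ i, ι 𝔽 i * degScale (fun n => ((n : 𝔽) + 1)⁻¹) (F i)))) =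
      F j := by
  have hinv : degScale (fun n => ((n : 𝔽) + 1)⁻¹) +
      degScale (fun n => (n : 𝔽)) ∘ₗ degScale (fun n => ((n : 𝔽) + 1)⁻¹) =
      (LinearMap.id : FreeAlgebra 𝔽 X →ₗ[𝔽] _) := by
    rw [degScale_comp_degScale, ← degScale_add, ← degScale_one]
    congr 1
    funext n
    simp only [Pi.add_apply, Pi.mul_apply, Pi.one_apply]
    field_simp
    ring
  simp only [map_sum, mul'_swap2_apply_ι_mul_degScale hD F hF, Finset.sum_add_distrib,
    Finset.sum_ite_eq, Finset.mem_univ, if_true, euler_formula hD]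
  exact LinearMap.congr_fun hinv (F j)

end PartialDerivatives

/-- on the free algebra `R_ℓ`, a 1-form `F` is closed
(`∂F_j/∂x_i = (∂F_i/∂x_j)^σ` for all `i,j`) iff it is exact
(`F_i = m((∂f/∂x_i)^σ)` for some `f`). -/
theorem statement_17 (𝔽 : Type) [Field 𝔽] [CharZero 𝔽] (ℓ : ℕ)
    (D : Fin ℓ → (FreeAlgebra 𝔽 (Fin ℓ) →ₗ[𝔽] FreeAlgebra 𝔽 (Fin ℓ) ⊗[𝔽] FreeAlgebra 𝔽 (Fin ℓ)))
    (hD : ∀ i, Is2Deriv (D i))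
    (hgen : ∀ i k, D i (FreeAlgebra.ι 𝔽 k) =
      if i = k then (1 : FreeAlgebra 𝔽 (Fin ℓ)) ⊗ₜ[𝔽] (1 : FreeAlgebra 𝔽 (Fin ℓ)) else 0)
    (F : Fin ℓ → FreeAlgebra 𝔽 (Fin ℓ)) :
    (∀ i j, D i (F j) = swap2 𝔽 (FreeAlgebra 𝔽 (Fin ℓ)) (D j (F i)))
      ↔ ∃ f : FreeAlgebra 𝔽 (Fin ℓ), ∀ i,
          F i = LinearMap.mul' 𝔽 (FreeAlgebra 𝔽 (Fin ℓ))
            (swap2 𝔽 (FreeAlgebra 𝔽 (Fin ℓ)) (D i f)) := by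
  have hpartial (i : Fin ℓ) : IsPartialDeriv (D i) i := ⟨hD i, hgen i⟩
  constructor
  · intro hF
    exact ⟨_, fun j => (mul'_swap2_apply_sum_ι_mul_degScale hpartial F hF j).symm⟩
  · rintro ⟨f, hf⟩ i j
    rw [hf i, hf j]
    exact (hD i).closed_of_stronglyComm (hD j) ((hpartial i).stronglyComm (hpartial j))
      ((hpartial j).stronglyComm (hpartial i)) f
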